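/- Fix a joint type P_{X̄Ȳ} over finite alphabets 𝒳, 𝒴 with type class T^n_{X̄Ȳ}, and a WAK code (φ̃₀, φ̃₂, ψ̃) with log|T^n_{X̄}| ≥ log|M̃₀|. Then there exists a Gray–Wyner code Φ = (φ₀, φ₁, φ₂, ψ₁, ψ₂) with: log|M₀| ≤ log|M̃₀| + log n + log log|𝒳| + 2; log(|M₀||M₁|) ≤ log|T^n_{X̄}| + log n + log log|𝒳| + 2; |M₂| = |M̃₂|; and the GW error probability of Φ under the uniform distribution on T^n_{X̄Ȳ} is at most the WAK error probability of (φ̃₀, φ̃₂, ψ̃) under the same distribution. -/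

import Mathlib

open scoped Classical BigOperators
noncomputable section

variable {𝒳 𝒴 : Type} [Fintype 𝒳] [Fintype 𝒴]

/-- the joint type class `T^n_{X̄Ȳ}` of the joint type `Q` (empirical counts). -/
def jointTypeClass (n : ℕ) (Q : 𝒳 × 𝒴 → ℕ) :
    Finset ((Fin n → 𝒳) × (Fin n → 𝒴)) :=
  Finset.univ.filter (fun p => ∀ z : 𝒳 × 𝒴,
    (Finset.univ.filter (fun i : Fin n => (p.1 i, p.2 i) = z)).card = Q z)

/-- the type class `T^n_{X̄}` of the `𝒳`-marginal of the joint type `Q`. -/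
def typeClassX (n : ℕ) (Q : 𝒳 × 𝒴 → ℕ) : Finset (Fin n → 𝒳) :=
  Finset.univ.filter (fun x => ∀ a : 𝒳,
    (Finset.univ.filter (fun i : Fin n => x i = a)).card = ∑ b, Q (a, b))

/-- error probability of the WAK code `(φ0, φ2, ψ)` under the uniform
distribution on the joint type class of `Q`. -/
def errWAK (n : ℕ) (Q : 𝒳 × 𝒴 → ℕ) {M0 M2 : Type}
    (φ0 : (Fin n → 𝒳) → M0) (φ2 : (Fin n → 𝒴) → M2)
    (ψ : M0 × M2 → (Fin n → 𝒴)) : ℝ :=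
  (((jointTypeClass n Q).filter (fun p => ψ (φ0 p.1, φ2 p.2) ≠ p.2)).card : ℝ) /
    ((jointTypeClass n Q).card : ℝ)

/-- error probability of the GW code `(φ0, φ1, φ2, ψ1, ψ2)` under the uniform
distribution on the joint type class of `Q`. -/
def errGW (n : ℕ) (Q : 𝒳 × 𝒴 → ℕ) {M0 M1 M2 : Type}
    (φ0 : (Fin n → 𝒳) × (Fin n → 𝒴) → M0)
    (φ1 : (Fin n → 𝒳) × (Fin n → 𝒴) → M1)
    (φ2 : (Fin n → 𝒳) × (Fin n → 𝒴) → M2)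
    (ψ1 : M0 × M1 → (Fin n → 𝒳)) (ψ2 : M0 × M2 → (Fin n → 𝒴)) : ℝ :=
  (((jointTypeClass n Q).filter
      (fun p => (ψ1 (φ0 p, φ1 p), ψ2 (φ0 p, φ2 p)) ≠ p)).card : ℝ) /
    ((jointTypeClass n Q).card : ℝ)

/-!
Cut every cell of the WAK helper encoder `φ0` on the type class `T = T^n_{X̄}` into blocks of
`c = ⌊|T| / |M0|⌋ + 1` consecutive elements. There are at most `|T| / c + |M0| < 2 |M0|` blocks,
so the block label is a common message of size at most `2 |M0|`, while the position of `x` inside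
its block is a private message of size `c`, and `(number of blocks) * c ≤ 3 |T|`. The block label
determines `φ0 x`, so the WAK decoder recovers `y` whenever the WAK code does, and block label and
position together determine `x ∈ T`.
-/

namespace Finset

variable {α β : Type*}

def fiberIndex (T : Finset α) (f : α → β) (x : α) : ℕ :=
  (T.filter (f · = f x)).toList.idxOf x

theorem fiberIndex_lt_card {T : Finset α} (f : α → β) {x : α} (hx : x ∈ T) :
    T.fiberIndex f x < (T.filter (f · = f x)).card := by
  rw [← length_toList]
  exact List.idxOf_lt_length_of_mem (by simpa using hx)

theorem injOn_fiberIndex (T : Finset α) (f : α → β) :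
    Set.InjOn (fun x => (f x, T.fiberIndex f x)) T := by
  intro x hx y hy hxy
  obtain ⟨hf, hi⟩ := Prod.ext_iff.mp hxy
  dsimp only at hf hi
  rw [fiberIndex, fiberIndex, hf] at hi
  exact (List.idxOf_inj (by simpa [hf] using hx)).mp hi

theorem sum_nat_div_le_sum_div (s : Finset α) (a : α → ℕ) (c : ℕ) :
    ∑ i ∈ s, a i / c ≤ (∑ i ∈ s, a i) / c := by
  rcases c.eq_zero_or_pos with rfl | hc
  · simp
  rw [Nat.le_div_iff_mul_le hc, sum_mul]
  exact sum_le_sum fun i _ => Nat.div_mul_le_self (a i) c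

def blockOf (T : Finset α) (f : α → β) (c : ℕ) (x : α) : β × ℕ :=
  (f x, T.fiberIndex f x / c)

theorem card_image_blockOf_le [Fintype β] (T : Finset α) (f : α → β) (c : ℕ) :
    (T.image (T.blockOf f c)).card ≤ T.card / c + Fintype.card β := by
  have hsub : T.image (T.blockOf f c) ⊆
      univ.biUnion fun b => {b} ×ˢ range ((T.filter (f · = b)).card / c + 1) := by
    intro z hz
    obtain ⟨x, hx, rfl⟩ := mem_image.mp hz
    simp only [blockOf, mem_biUnion, mem_univ, true_and, mem_product, mem_singleton, mem_range]
    exact ⟨f x, rfl, Nat.lt_succ_of_le (Nat.div_le_div_right (fiberIndex_lt_card f hx).le)⟩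
  have hfibers : ∑ b, (T.filter (f · = b)).card = T.card :=
    (card_eq_sum_card_fiberwise fun x _ => mem_univ (f x)).symm
  calc (T.image (T.blockOf f c)).card
      ≤ ∑ b, ({b} ×ˢ range ((T.filter (f · = b)).card / c + 1)).card :=
        (card_le_card hsub).trans card_biUnion_le
    _ = ∑ b, (T.filter (f · = b)).card / c + Fintype.card β := by
        simp [sum_add_distrib]
    _ ≤ T.card / c + Fintype.card β := by
        gcongr
        exact hfibers ▸ sum_nat_div_le_sum_div _ _ c

theorem injOn_blockOf_fiberIndex_mod (T : Finset α) (f : α → β) (c : ℕ) :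
    Set.InjOn (fun x => (T.blockOf f c x, T.fiberIndex f x % c)) T := by
  intro x hx y hy hxy
  simp only [blockOf, Prod.ext_iff] at hxy
  obtain ⟨⟨hf, hdiv⟩, hmod⟩ := hxy
  refine injOn_fiberIndex T f hx hy (Prod.ext hf ?_)
  show T.fiberIndex f x = T.fiberIndex f y
  rw [← Nat.div_add_mod (T.fiberIndex f x) c, ← Nat.div_add_mod (T.fiberIndex f y) c, hdiv, hmod]

theorem exists_balanced_refinement [Fintype β] (f : α → β) {T : Finset α} (hT : T.Nonempty)
    (hβT : Fintype.card β ≤ T.card) :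
    ∃ (k c : ℕ) (g : α → Fin k) (h : α → Fin c) (r : Fin k → β),
      k ≤ 2 * Fintype.card β ∧ k * c ≤ 3 * T.card ∧
      (∀ x ∈ T, r (g x) = f x) ∧ Set.InjOn (fun x => (g x, h x)) T := by
  set m := Fintype.card β
  set N := T.card
  have hm : 0 < m := Fintype.card_pos_iff.mpr ⟨f hT.choose⟩
  set c := N / m + 1
  set S := T.image (T.blockOf f c)
  have hS : 0 < S.card := (hT.image _).card_pos
  have hSc : S.card ≤ N / c + m := card_image_blockOf_le T f c
  have hNc : N / c < m := Nat.div_lt_of_lt_mul (by simpa [mul_comm] using Nat.lt_mul_div_succ N hm)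
  let g : α → Fin S.card := fun x =>
    if hx : T.blockOf f c x ∈ S then S.equivFin ⟨_, hx⟩ else ⟨0, hS⟩
  have hg : ∀ x ∈ T, (S.equivFin.symm (g x) : β × ℕ) = T.blockOf f c x := fun x hx => by
    have hxS : T.blockOf f c x ∈ S := mem_image_of_mem _ hx
    simp only [g, dif_pos hxS, Equiv.symm_apply_apply]
  refine ⟨S.card, c, g, fun x => ⟨T.fiberIndex f x % c, Nat.mod_lt _ (N / m).succ_pos⟩,
    fun a => (S.equivFin.symm a : β × ℕ).1, by omega, ?_,
    fun x hx => congrArg Prod.fst (hg x hx), ?_⟩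
  · calc S.card * c ≤ (N / c + m) * c := Nat.mul_le_mul_right c hSc
      _ = N / c * c + (m * (N / m) + m) := by ring
      _ ≤ N + (N + N) := by gcongr <;> [exact Nat.div_mul_le_self N c; exact Nat.mul_div_le N m]
      _ = 3 * N := by ring
  · intro x hx y hy hxy
    simp only [Prod.ext_iff, Fin.ext_iff] at hxy
    refine injOn_blockOf_fiberIndex_mod T f c hx hy (Prod.ext ?_ hxy.2)
    show T.blockOf f c x = T.blockOf f c y
    rw [← hg x hx, ← hg y hy, Fin.ext hxy.1]

theorem exists_refinement_leftInvOn [Fintype β] (f : α → β) (T : Finset α)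
    (hβT : T.Nonempty → Fintype.card β ≤ T.card) :
    ∃ (k c : ℕ) (g : α → Fin k) (h : α → Fin c) (r : Fin k → β) (ι : Fin k × Fin c → α),
      k ≤ 2 * max (Fintype.card β) 1 ∧ k * c ≤ 4 * max T.card 1 ∧
      (∀ x ∈ T, r (g x) = f x) ∧ Set.LeftInvOn ι (fun x => (g x, h x)) T := by
  rcases isEmpty_or_nonempty α with hα | hα
  · exact ⟨0, 0, isEmptyElim, isEmptyElim, Fin.elim0, fun a => a.1.elim0, by simp, by simp,
      fun x => isEmptyElim x, fun x => isEmptyElim x⟩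
  rcases T.eq_empty_or_nonempty with hT | hT
  · exact ⟨1, 1, 0, 0, fun _ => f hα.some, fun _ => hα.some, by omega, by omega,
      by simp [hT], by simp [hT, Set.LeftInvOn]⟩
  obtain ⟨k, c, g, h, r, hk, hkc, hr, hinj⟩ := T.exists_balanced_refinement f hT (hβT hT)
  exact ⟨k, c, g, h, r, _, by omega, by omega, hr, hinj.leftInvOn_invFunOn⟩

end Finset

namespace Real

theorem logb_two_natCast_nonneg (b : ℕ) : 0 ≤ logb 2 b :=
  div_nonneg (log_natCast_nonneg b) (log_nonneg one_le_two)

theorem logb_two_logb_two_natCast_nonneg (d : ℕ) : 0 ≤ logb 2 (logb 2 d) := by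
  rcases le_or_gt d 1 with hd | hd
  · interval_cases d <;> simp
  · refine logb_nonneg one_lt_two ?_
    rw [le_logb_iff_rpow_le one_lt_two (by positivity), rpow_one]
    exact_mod_cast hd

theorem logb_two_natCast_le_of_le_two_pow_mul {a b j : ℕ} (h : a ≤ 2 ^ j * max b 1) :
    logb 2 a ≤ logb 2 b + j := by
  have hmax : logb 2 (max b 1 : ℕ) = logb 2 b := by
    rcases b.eq_zero_or_pos with rfl | hb
    · simp
    · rw [max_eq_left hb]
  rcases a.eq_zero_or_pos with rfl | ha
  · simpa using add_nonneg (logb_two_natCast_nonneg b) j.cast_nonneg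
  calc logb 2 a ≤ logb 2 (2 ^ j * max b 1 : ℕ) :=
        logb_le_logb_of_le one_lt_two (by exact_mod_cast ha) (by exact_mod_cast h)
    _ = logb 2 b + j := by
        rw [Nat.cast_mul, logb_mul (by positivity) (by positivity), ← hmax, Nat.cast_pow,
          Nat.cast_ofNat, logb_pow, logb_self_eq_one one_lt_two, mul_one, add_comm]

end Real

theorem mem_typeClassX_of_mem_jointTypeClass {n : ℕ} {Q : 𝒳 × 𝒴 → ℕ}
    {p : (Fin n → 𝒳) × (Fin n → 𝒴)} (hp : p ∈ jointTypeClass n Q) :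
    p.1 ∈ typeClassX n Q := by
  simp only [jointTypeClass, Finset.mem_filter, Finset.mem_univ, true_and] at hp
  simp only [typeClassX, Finset.mem_filter, Finset.mem_univ, true_and]
  intro a
  rw [Finset.card_eq_sum_card_fiberwise fun i _ => Finset.mem_univ (p.2 i)]
  refine Finset.sum_congr rfl fun b _ => ?_
  rw [Finset.filter_filter, ← hp (a, b)]
  simp [Prod.ext_iff]

theorem errGW_le_errWAK_of_forall {n : ℕ} {Q : 𝒳 × 𝒴 → ℕ} {M0 M1 M2 N0 N2 : Type}
    {φ0' : (Fin n → 𝒳) × (Fin n → 𝒴) → M0} {φ1' : (Fin n → 𝒳) × (Fin n → 𝒴) → M1}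
    {φ2' : (Fin n → 𝒳) × (Fin n → 𝒴) → M2}
    {ψ1 : M0 × M1 → (Fin n → 𝒳)} {ψ2 : M0 × M2 → (Fin n → 𝒴)}
    {φ0 : (Fin n → 𝒳) → N0} {φ2 : (Fin n → 𝒴) → N2} {ψ : N0 × N2 → (Fin n → 𝒴)}
    (h : ∀ p ∈ jointTypeClass n Q, ψ (φ0 p.1, φ2 p.2) = p.2 →
      (ψ1 (φ0' p, φ1' p), ψ2 (φ0' p, φ2' p)) = p) :
    errGW n Q φ0' φ1' φ2' ψ1 ψ2 ≤ errWAK n Q φ0 φ2 ψ := by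
  unfold errGW errWAK
  gcongr with p hp
  exact h p hp

theorem stmt_11_general {M0 M2 : Type} [Fintype M0] [Fintype M2]
    (n : ℕ) (Q : 𝒳 × 𝒴 → ℕ)
    (φ0 : (Fin n → 𝒳) → M0) (φ2 : (Fin n → 𝒴) → M2)
    (ψ : M0 × M2 → (Fin n → 𝒴))
    (hM0 : Real.logb 2 (Fintype.card M0)
            ≤ Real.logb 2 ((typeClassX n Q).card)) :
    ∃ (k k1 : ℕ)
      (φ0' : (Fin n → 𝒳) × (Fin n → 𝒴) → Fin k)
      (φ1' : (Fin n → 𝒳) × (Fin n → 𝒴) → Fin k1)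
      (φ2' : (Fin n → 𝒳) × (Fin n → 𝒴) → M2)
      (ψ1 : Fin k × Fin k1 → (Fin n → 𝒳))
      (ψ2 : Fin k × M2 → (Fin n → 𝒴)),
      Real.logb 2 k ≤ Real.logb 2 (Fintype.card M0) + Real.logb 2 n
          + Real.logb 2 (Real.logb 2 (Fintype.card 𝒳)) + 2 ∧
      Real.logb 2 (k * k1) ≤ Real.logb 2 ((typeClassX n Q).card)
          + Real.logb 2 n + Real.logb 2 (Real.logb 2 (Fintype.card 𝒳)) + 2 ∧
      errGW n Q φ0' φ1' φ2' ψ1 ψ2 ≤ errWAK n Q φ0 φ2 ψ := by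
  have hcard : (typeClassX n Q).Nonempty → Fintype.card M0 ≤ (typeClassX n Q).card := by
    intro hT
    have hM0pos : (0 : ℝ) < Fintype.card M0 := by
      exact_mod_cast Fintype.card_pos_iff.mpr ⟨φ0 hT.choose⟩
    exact_mod_cast (Real.logb_le_logb one_lt_two hM0pos (by exact_mod_cast hT.card_pos)).mp hM0
  obtain ⟨k, c, g, h, r, ψ1, hk, hkc, hr, hψ1⟩ :=
    (typeClassX n Q).exists_refinement_leftInvOn φ0 hcard
  have hslack := add_nonneg (Real.logb_two_natCast_nonneg n)
    (Real.logb_two_logb_two_natCast_nonneg (Fintype.card 𝒳))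
  have hlogk := Real.logb_two_natCast_le_of_le_two_pow_mul (j := 1) (by simpa using hk)
  have hlogkc := Real.logb_two_natCast_le_of_le_two_pow_mul (j := 2) (by simpa using hkc)
  push_cast at hlogk hlogkc
  refine ⟨k, c, g ∘ Prod.fst, h ∘ Prod.fst, φ2 ∘ Prod.snd, ψ1, fun a => ψ (r a.1, a.2),
    by linarith, by linarith, errGW_le_errWAK_of_forall fun p hp hdec => ?_⟩
  have hx := mem_typeClassX_of_mem_jointTypeClass hp
  simp [hψ1 hx, hr _ hx, hdec]

/-- reduction from WAK to Gray–Wyner.  From a WAK code with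
`log|T^n_{X̄}| ≥ log|M̃₀|` one can construct a GW code (same `M₂`, so
`|M₂| = |M̃₂|`) with `log|M₀| ≤ log|M̃₀| + log n + log log|𝒳| + 2`,
`log(|M₀||M₁|) ≤ log|T^n_{X̄}| + log n + log log|𝒳| + 2`, and GW error
probability on the type class at most the WAK error probability. -/
theorem stmt_11 {M0 M2 : Type} [Fintype M0] [Fintype M2] [Nonempty 𝒴]
    (n : ℕ) (hn : 1 ≤ n) (Q : 𝒳 × 𝒴 → ℕ) (hQ : ∑ z, Q z = n)
    (φ0 : (Fin n → 𝒳) → M0) (φ2 : (Fin n → 𝒴) → M2)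
    (ψ : M0 × M2 → (Fin n → 𝒴))
    (hM0 : Real.logb 2 (Fintype.card M0)
            ≤ Real.logb 2 ((typeClassX n Q).card)) :
    ∃ (k k1 : ℕ)
      (φ0' : (Fin n → 𝒳) × (Fin n → 𝒴) → Fin k)
      (φ1' : (Fin n → 𝒳) × (Fin n → 𝒴) → Fin k1)
      (φ2' : (Fin n → 𝒳) × (Fin n → 𝒴) → M2)
      (ψ1 : Fin k × Fin k1 → (Fin n → 𝒳))
      (ψ2 : Fin k × M2 → (Fin n → 𝒴)),
      Real.logb 2 k ≤ Real.logb 2 (Fintype.card M0) + Real.logb 2 n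
          + Real.logb 2 (Real.logb 2 (Fintype.card 𝒳)) + 2 ∧
      Real.logb 2 (k * k1) ≤ Real.logb 2 ((typeClassX n Q).card)
          + Real.logb 2 n + Real.logb 2 (Real.logb 2 (Fintype.card 𝒳)) + 2 ∧
      errGW n Q φ0' φ1' φ2' ψ1 ψ2 ≤ errWAK n Q φ0 φ2 ψ :=
  stmt_11_general n Q φ0 φ2 ψ hM0
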